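/- The function z ↦ z/(e^z - 1), extended by the value 1 at z = 0, is convex on (0, ∞). -/

import Mathlib

/-!
The second derivative of `z / (exp z - 1)` is `exp z * ((z - 2) * exp z + z + 2) / (exp z - 1) ^ 3`.
The bracket vanishes at `0` and its derivative `(z - 1) * exp z + 1` is nonnegative
(multiply `1 - z ≤ exp (-z)` by `exp z`), so it is nonnegative for `z ≥ 0`.
-/

open Real Set

lemma sub_one_mul_exp_add_one_nonneg (x : ℝ) : 0 ≤ (x - 1) * exp x + 1 := by
  have h := mul_le_mul_of_nonneg_right (one_sub_le_exp_neg x) (exp_pos x).le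
  rw [← exp_add, neg_add_cancel, exp_zero] at h
  linarith

lemma sub_two_mul_exp_add_add_two_nonneg {x : ℝ} (hx : 0 ≤ x) :
    0 ≤ (x - 2) * exp x + x + 2 := by
  have hderiv (y : ℝ) :
      HasDerivAt (fun y => (y - 2) * exp y + y + 2) ((y - 1) * exp y + 1) y := by
    refine ((((hasDerivAt_id' y).sub_const 2).fun_mul (hasDerivAt_exp y)).fun_add
      (hasDerivAt_id' y)).add_const 2 |>.congr_deriv ?_
    ring
  simpa using monotone_of_hasDerivAt_nonneg hderiv sub_one_mul_exp_add_one_nonneg hx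

lemma exp_sub_one_ne_zero {x : ℝ} (hx : x ≠ 0) : exp x - 1 ≠ 0 :=
  sub_ne_zero.mpr (exp_eq_one_iff x |>.not.mpr hx)

lemma hasDerivAt_div_exp_sub_one {x : ℝ} (hx : x ≠ 0) :
    HasDerivAt (fun z => z / (exp z - 1)) ((exp x - 1 - x * exp x) / (exp x - 1) ^ 2) x := by
  refine (hasDerivAt_id' x).fun_div ((hasDerivAt_exp x).sub_const 1) (exp_sub_one_ne_zero hx)
    |>.congr_deriv ?_
  ring

lemma hasDerivAt_sub_mul_exp_div_exp_sub_one_sq {x : ℝ} (hx : x ≠ 0) :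
    HasDerivAt (fun z => (exp z - 1 - z * exp z) / (exp z - 1) ^ 2)
      (exp x * ((x - 2) * exp x + x + 2) / (exp x - 1) ^ 3) x := by
  have hne := exp_sub_one_ne_zero hx
  have hnum :=
    ((hasDerivAt_exp x).sub_const 1).fun_sub ((hasDerivAt_id' x).fun_mul (hasDerivAt_exp x))
  refine hnum.fun_div (((hasDerivAt_exp x).sub_const 1).fun_pow 2) (pow_ne_zero 2 hne)
    |>.congr_deriv ?_
  field_simp
  ring

theorem z_div_exp_sub_one_convex :
    ConvexOn ℝ (Set.Ioi (0 : ℝ)) (fun z : ℝ => z / (Real.exp z - 1)) := by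
  refine convexOn_of_hasDerivWithinAt2_nonneg (convex_Ioi 0)
    (fun x hx => (hasDerivAt_div_exp_sub_one hx.ne').continuousAt.continuousWithinAt)
    (fun x hx => (hasDerivAt_div_exp_sub_one (interior_subset hx).ne').hasDerivWithinAt)
    (fun x hx =>
      (hasDerivAt_sub_mul_exp_div_exp_sub_one_sq (interior_subset hx).ne').hasDerivWithinAt)
    (fun x hx => ?_)
  have hx : 0 < x := interior_subset hx
  have hden : 0 < exp x - 1 := sub_pos.mpr (one_lt_exp_iff.mpr hx)
  exact div_nonneg (mul_nonneg (exp_pos x).le (sub_two_mul_exp_add_add_two_nonneg hx.le))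
    (pow_nonneg hden.le 3)
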